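/- For any complex numbers f_2, f_4, f_6, … there exists a surjective ℂ-algebra homomorphism from the affine Brauer algebra A(n,N) onto the degenerate affine Hecke algebra H(n) sending s_k ↦ s_k, t_k ↦ 0, y_k ↦ v_k, and w_i ↦ f_i·1 for every even i (the images of the w_i for odd i being the scalars determined by the recursion −2 w_i = w_{i−1} + Σ_{j=1}^{i} (−1)^j w_{i−j} w_{j−1} with w_0 = N). -/

import Mathlib

noncomputable section

open scoped BigOperators

/-- Index type for the generators of the affine Brauer algebra `A(n,N)`:
the generators `s₁,…,s_{n−1}`, `t₁,…,t_{n−1}`, `y₁,…,yₙ` and `w₁, w₂, …`. -/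
abbrev AIdx (n : ℕ) := (Fin (n - 1) ⊕ Fin (n - 1)) ⊕ (Fin n ⊕ ℕ)

/-- The generator `s_k` (1-based) in the free algebra. -/
def aS (n : ℕ) (k : ℕ) : FreeAlgebra ℂ (AIdx n) :=
  if h : 1 ≤ k ∧ k ≤ n - 1 then
    FreeAlgebra.ι ℂ (Sum.inl (Sum.inl ⟨k - 1, by omega⟩)) else 0

/-- The generator `t_k` (1-based) in the free algebra. -/
def aT (n : ℕ) (k : ℕ) : FreeAlgebra ℂ (AIdx n) :=
  if h : 1 ≤ k ∧ k ≤ n - 1 then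
    FreeAlgebra.ι ℂ (Sum.inl (Sum.inr ⟨k - 1, by omega⟩)) else 0

/-- The generator `y_k` (1-based) in the free algebra. -/
def aY (n : ℕ) (k : ℕ) : FreeAlgebra ℂ (AIdx n) :=
  if h : 1 ≤ k ∧ k ≤ n then
    FreeAlgebra.ι ℂ (Sum.inr (Sum.inl ⟨k - 1, by omega⟩)) else 0

/-- The generator `w_i` for `i ≥ 1`, with the convention `w₀ = N`. -/
def aW (n : ℕ) (N : ℂ) (i : ℕ) : FreeAlgebra ℂ (AIdx n) :=
  if 1 ≤ i then FreeAlgebra.ι ℂ (Sum.inr (Sum.inr (i - 1)))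
  else algebraMap ℂ (FreeAlgebra ℂ (AIdx n)) N

/-- The defining relations of the affine Brauer algebra `A(n,N)`. -/
inductive AffRel (n : ℕ) (N : ℂ) :
    FreeAlgebra ℂ (AIdx n) → FreeAlgebra ℂ (AIdx n) → Prop
  | s_sq (k : ℕ) (h : 1 ≤ k ∧ k ≤ n - 1) :
      AffRel n N (aS n k * aS n k) 1
  | t_sq (k : ℕ) (h : 1 ≤ k ∧ k ≤ n - 1) :
      AffRel n N (aT n k * aT n k) (N • aT n k)
  | st (k : ℕ) (h : 1 ≤ k ∧ k ≤ n - 1) :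
      AffRel n N (aS n k * aT n k) (aT n k)
  | ts (k : ℕ) (h : 1 ≤ k ∧ k ≤ n - 1) :
      AffRel n N (aT n k * aS n k) (aT n k)
  | braid (k : ℕ) (h : 1 ≤ k ∧ k + 1 ≤ n - 1) :
      AffRel n N (aS n k * aS n (k+1) * aS n k) (aS n (k+1) * aS n k * aS n (k+1))
  | ttt_lo (k : ℕ) (h : 1 ≤ k ∧ k + 1 ≤ n - 1) :
      AffRel n N (aT n k * aT n (k+1) * aT n k) (aT n k)
  | ttt_hi (k : ℕ) (h : 1 ≤ k ∧ k + 1 ≤ n - 1) :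
      AffRel n N (aT n (k+1) * aT n k * aT n (k+1)) (aT n (k+1))
  | stt (k : ℕ) (h : 1 ≤ k ∧ k + 1 ≤ n - 1) :
      AffRel n N (aS n k * aT n (k+1) * aT n k) (aS n (k+1) * aT n k)
  | tts (k : ℕ) (h : 1 ≤ k ∧ k + 1 ≤ n - 1) :
      AffRel n N (aT n (k+1) * aT n k * aS n (k+1)) (aT n (k+1) * aS n k)
  | ss_comm (k l : ℕ)
      (h : 1 ≤ k ∧ k ≤ n - 1 ∧ 1 ≤ l ∧ l ≤ n - 1 ∧ (k + 1 < l ∨ l + 1 < k)) :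
      AffRel n N (aS n k * aS n l) (aS n l * aS n k)
  | ts_comm (k l : ℕ)
      (h : 1 ≤ k ∧ k ≤ n - 1 ∧ 1 ≤ l ∧ l ≤ n - 1 ∧ (k + 1 < l ∨ l + 1 < k)) :
      AffRel n N (aT n k * aS n l) (aS n l * aT n k)
  | tt_comm (k l : ℕ)
      (h : 1 ≤ k ∧ k ≤ n - 1 ∧ 1 ≤ l ∧ l ≤ n - 1 ∧ (k + 1 < l ∨ l + 1 < k)) :
      AffRel n N (aT n k * aT n l) (aT n l * aT n k)
  | yy_comm (k l : ℕ) (h : 1 ≤ k ∧ k ≤ n ∧ 1 ≤ l ∧ l ≤ n) :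
      AffRel n N (aY n k * aY n l) (aY n l * aY n k)
  | ws_comm (i k : ℕ) (h : 1 ≤ i ∧ 1 ≤ k ∧ k ≤ n - 1) :
      AffRel n N (aW n N i * aS n k) (aS n k * aW n N i)
  | wt_comm (i k : ℕ) (h : 1 ≤ i ∧ 1 ≤ k ∧ k ≤ n - 1) :
      AffRel n N (aW n N i * aT n k) (aT n k * aW n N i)
  | wy_comm (i k : ℕ) (h : 1 ≤ i ∧ 1 ≤ k ∧ k ≤ n) :
      AffRel n N (aW n N i * aY n k) (aY n k * aW n N i)
  | ww_comm (i j : ℕ) (h : 1 ≤ i ∧ 1 ≤ j) :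
      AffRel n N (aW n N i * aW n N j) (aW n N j * aW n N i)
  | sy_comm (k l : ℕ)
      (h : 1 ≤ k ∧ k ≤ n - 1 ∧ 1 ≤ l ∧ l ≤ n ∧ l ≠ k ∧ l ≠ k + 1) :
      AffRel n N (aS n k * aY n l) (aY n l * aS n k)
  | ty_comm (k l : ℕ)
      (h : 1 ≤ k ∧ k ≤ n - 1 ∧ 1 ≤ l ∧ l ≤ n ∧ l ≠ k ∧ l ≠ k + 1) :
      AffRel n N (aT n k * aY n l) (aY n l * aT n k)
  | sy_lo (k : ℕ) (h : 1 ≤ k ∧ k ≤ n - 1) :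
      AffRel n N (aS n k * aY n k) (aY n (k+1) * aS n k + aT n k - 1)
  | sy_hi (k : ℕ) (h : 1 ≤ k ∧ k ≤ n - 1) :
      AffRel n N (aS n k * aY n (k+1)) (aY n k * aS n k + 1 - aT n k)
  | tyy (k : ℕ) (h : 1 ≤ k ∧ k ≤ n - 1) :
      AffRel n N (aT n k * (aY n k + aY n (k+1))) 0
  | yyt (k : ℕ) (h : 1 ≤ k ∧ k ≤ n - 1) :
      AffRel n N ((aY n k + aY n (k+1)) * aT n k) 0
  | tyt (i : ℕ) (h : 1 ≤ i ∧ 1 ≤ n - 1) :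
      AffRel n N (aT n 1 * aY n 1 ^ i * aT n 1) (aW n N i * aT n 1)

/-- The affine Brauer algebra `A(n,N)`. -/
abbrev AffineBrauer (n : ℕ) (N : ℂ) := RingQuot (AffRel n N)

/-- The generator `s_k` (1-based) of `A(n,N)`. -/
def sA (n : ℕ) (N : ℂ) (k : ℕ) : AffineBrauer n N :=
  RingQuot.mkAlgHom ℂ (AffRel n N) (aS n k)

/-- The generator `t_k` (1-based) of `A(n,N)`. -/
def tA (n : ℕ) (N : ℂ) (k : ℕ) : AffineBrauer n N :=
  RingQuot.mkAlgHom ℂ (AffRel n N) (aT n k)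

/-- The generator `y_k` (1-based) of `A(n,N)`. -/
def yA (n : ℕ) (N : ℂ) (k : ℕ) : AffineBrauer n N :=
  RingQuot.mkAlgHom ℂ (AffRel n N) (aY n k)

/-- The central generator `w_i` of `A(n,N)` for `i ≥ 1` (with `w₀ = N`). -/
def wA (n : ℕ) (N : ℂ) (i : ℕ) : AffineBrauer n N :=
  RingQuot.mkAlgHom ℂ (AffRel n N) (aW n N i)

/-- Index type for the generators of the degenerate affine Hecke algebra
`H(n)`: the generators `s₁,…,s_{n−1}` and `v₁,…,vₙ`. -/
abbrev HIdx (n : ℕ) := Fin (n - 1) ⊕ Fin n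

/-- The generator `s_k` (1-based) in the free algebra. -/
def hS (n : ℕ) (k : ℕ) : FreeAlgebra ℂ (HIdx n) :=
  if h : 1 ≤ k ∧ k ≤ n - 1 then FreeAlgebra.ι ℂ (Sum.inl ⟨k - 1, by omega⟩) else 0

/-- The generator `v_k` (1-based) in the free algebra. -/
def hV (n : ℕ) (k : ℕ) : FreeAlgebra ℂ (HIdx n) :=
  if h : 1 ≤ k ∧ k ≤ n then FreeAlgebra.ι ℂ (Sum.inr ⟨k - 1, by omega⟩) else 0

/-- The defining relations of the degenerate affine Hecke algebra `H(n)`. -/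
inductive HeckeRel (n : ℕ) :
    FreeAlgebra ℂ (HIdx n) → FreeAlgebra ℂ (HIdx n) → Prop
  | s_sq (k : ℕ) (h : 1 ≤ k ∧ k ≤ n - 1) :
      HeckeRel n (hS n k * hS n k) 1
  | braid (k : ℕ) (h : 1 ≤ k ∧ k + 1 ≤ n - 1) :
      HeckeRel n (hS n k * hS n (k+1) * hS n k) (hS n (k+1) * hS n k * hS n (k+1))
  | ss_comm (k l : ℕ)
      (h : 1 ≤ k ∧ k ≤ n - 1 ∧ 1 ≤ l ∧ l ≤ n - 1 ∧ (k + 1 < l ∨ l + 1 < k)) :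
      HeckeRel n (hS n k * hS n l) (hS n l * hS n k)
  | vv_comm (k l : ℕ) (h : 1 ≤ k ∧ k ≤ n ∧ 1 ≤ l ∧ l ≤ n) :
      HeckeRel n (hV n k * hV n l) (hV n l * hV n k)
  | sv_comm (k l : ℕ)
      (h : 1 ≤ k ∧ k ≤ n - 1 ∧ 1 ≤ l ∧ l ≤ n ∧ l ≠ k ∧ l ≠ k + 1) :
      HeckeRel n (hS n k * hV n l) (hV n l * hS n k)
  | sv_lo (k : ℕ) (h : 1 ≤ k ∧ k ≤ n - 1) :
      HeckeRel n (hS n k * hV n k) (hV n (k+1) * hS n k - 1)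
  | sv_hi (k : ℕ) (h : 1 ≤ k ∧ k ≤ n - 1) :
      HeckeRel n (hS n k * hV n (k+1)) (hV n k * hS n k + 1)

/-- The degenerate affine Hecke algebra `H(n)`. -/
abbrev HeckeAlg (n : ℕ) := RingQuot (HeckeRel n)

/-- The generator `s_k` (1-based) of `H(n)`. -/
def sH (n : ℕ) (k : ℕ) : HeckeAlg n :=
  RingQuot.mkAlgHom ℂ (HeckeRel n) (hS n k)

/-- The generator `v_k` (1-based) of `H(n)`. -/
def vH (n : ℕ) (k : ℕ) : HeckeAlg n :=
  RingQuot.mkAlgHom ℂ (HeckeRel n) (hV n k)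

/-! ### Auxiliary definitions for the proof -/

noncomputable def wprime (N : ℂ) (f : ℕ → ℂ) : ℕ → ℂ
  | 0 => N
  | (i+1) =>
    if Even (i+1) then f (i+1)
    else (-1/2) * (wprime N f i +
      ∑ j ∈ (Finset.Icc 1 (i+1)).attach,
        (-1:ℂ) ^ (j:ℕ) * (wprime N f (i+1-(j:ℕ)) * wprime N f ((j:ℕ)-1)))
  decreasing_by
    all_goals first | omega | (have hj := Finset.mem_Icc.mp j.2; omega)

theorem wprime_zero (N : ℂ) (f : ℕ → ℂ) : wprime N f 0 = N := by rw [wprime]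

theorem wprime_even (N : ℂ) (f : ℕ → ℂ) (i : ℕ) (h : Even i) (h1 : 1 ≤ i) :
    wprime N f i = f i := by
  obtain ⟨m, rfl⟩ : ∃ m, i = m + 1 := ⟨i-1, by omega⟩
  rw [wprime, if_pos h]

theorem wprime_odd (N : ℂ) (f : ℕ → ℂ) (i : ℕ) (h : Odd i) :
    -2 * wprime N f i = wprime N f (i - 1)
      + ∑ j ∈ Finset.Icc 1 i, (-1 : ℂ) ^ j * (wprime N f (i - j) * wprime N f (j - 1)) := by
  obtain ⟨m, rfl⟩ : ∃ m, i = m + 1 := ⟨i-1, by have := h.pos; omega⟩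
  rw [wprime, if_neg (Nat.not_even_iff_odd.mpr h), ← Finset.sum_attach (Finset.Icc 1 (m+1))
    (fun j => (-1:ℂ) ^ j * (wprime N f (m+1-j) * wprime N f (j-1)))]
  simp only [Nat.add_sub_cancel]
  ring

/-- The images of the generators. -/
noncomputable def toHgen (n : ℕ) (w' : ℕ → ℂ) : AIdx n → HeckeAlg n
  | .inl (.inl k) => sH n (k.1+1)
  | .inl (.inr _) => 0
  | .inr (.inl k) => vH n (k.1+1)
  | .inr (.inr i) => algebraMap ℂ _ (w' (i+1))

noncomputable def phi0 (n : ℕ) (w' : ℕ → ℂ) : FreeAlgebra ℂ (AIdx n) →ₐ[ℂ] HeckeAlg n :=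
  FreeAlgebra.lift ℂ (toHgen n w')

theorem phi0_S (n : ℕ) (w' : ℕ → ℂ) (k : ℕ) : phi0 n w' (aS n k) = sH n k := by
  by_cases h : 1 ≤ k ∧ k ≤ n - 1
  · rw [aS, dif_pos h, phi0, FreeAlgebra.lift_ι_apply, toHgen]
    simp only [Fin.val_mk, Nat.sub_add_cancel h.1]
  · rw [aS, dif_neg h, map_zero, sH, hS, dif_neg h, map_zero]

theorem phi0_T (n : ℕ) (w' : ℕ → ℂ) (k : ℕ) : phi0 n w' (aT n k) = 0 := by
  by_cases h : 1 ≤ k ∧ k ≤ n - 1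
  · rw [aT, dif_pos h, phi0, FreeAlgebra.lift_ι_apply]; rfl
  · rw [aT, dif_neg h, map_zero]

theorem phi0_Y (n : ℕ) (w' : ℕ → ℂ) (k : ℕ) : phi0 n w' (aY n k) = vH n k := by
  by_cases h : 1 ≤ k ∧ k ≤ n
  · rw [aY, dif_pos h, phi0, FreeAlgebra.lift_ι_apply, toHgen]
    simp only [Fin.val_mk, Nat.sub_add_cancel h.1]
  · rw [aY, dif_neg h, map_zero, vH, hV, dif_neg h, map_zero]

theorem phi0_W (n : ℕ) (N : ℂ) (w' : ℕ → ℂ) (h0 : w' 0 = N) (i : ℕ) :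
    phi0 n w' (aW n N i) = algebraMap ℂ (HeckeAlg n) (w' i) := by
  by_cases h : 1 ≤ i
  · rw [aW, if_pos h, phi0, FreeAlgebra.lift_ι_apply, toHgen]
    rw [Nat.sub_add_cancel h]
  · rw [aW, if_neg h, AlgHom.commutes]
    have : i = 0 := by omega
    rw [this, h0]

theorem hecke_mk (n : ℕ) {x y : FreeAlgebra ℂ (HIdx n)} (h : HeckeRel n x y) :
    RingQuot.mkAlgHom ℂ (HeckeRel n) x = RingQuot.mkAlgHom ℂ (HeckeRel n) y :=
  RingQuot.mkAlgHom_rel ℂ h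

theorem hS_sq (n k : ℕ) (h : 1 ≤ k ∧ k ≤ n - 1) : sH n k * sH n k = 1 := by
  rw [sH, ← map_mul]
  exact (hecke_mk n (HeckeRel.s_sq k h)).trans (map_one _)

theorem hS_braid (n k : ℕ) (h : 1 ≤ k ∧ k + 1 ≤ n - 1) :
    sH n k * sH n (k+1) * sH n k = sH n (k+1) * sH n k * sH n (k+1) := by
  simp only [sH, ← map_mul]; exact hecke_mk n (HeckeRel.braid k h)

theorem hS_comm (n k l : ℕ)
    (h : 1 ≤ k ∧ k ≤ n - 1 ∧ 1 ≤ l ∧ l ≤ n - 1 ∧ (k + 1 < l ∨ l + 1 < k)) :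
    sH n k * sH n l = sH n l * sH n k := by
  simp only [sH, ← map_mul]; exact hecke_mk n (HeckeRel.ss_comm k l h)

theorem hV_comm (n k l : ℕ) (h : 1 ≤ k ∧ k ≤ n ∧ 1 ≤ l ∧ l ≤ n) :
    vH n k * vH n l = vH n l * vH n k := by
  simp only [vH, ← map_mul]; exact hecke_mk n (HeckeRel.vv_comm k l h)

theorem hSV_comm (n k l : ℕ)
    (h : 1 ≤ k ∧ k ≤ n - 1 ∧ 1 ≤ l ∧ l ≤ n ∧ l ≠ k ∧ l ≠ k + 1) :
    sH n k * vH n l = vH n l * sH n k := by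
  simp only [sH, vH, ← map_mul]; exact hecke_mk n (HeckeRel.sv_comm k l h)

theorem hSV_lo (n k : ℕ) (h : 1 ≤ k ∧ k ≤ n - 1) :
    sH n k * vH n k = vH n (k+1) * sH n k - 1 := by
  simp only [sH, vH, ← map_mul]
  exact (hecke_mk n (HeckeRel.sv_lo k h)).trans (by simp [map_sub])

theorem hSV_hi (n k : ℕ) (h : 1 ≤ k ∧ k ≤ n - 1) :
    sH n k * vH n (k+1) = vH n k * sH n k + 1 := by
  simp only [sH, vH, ← map_mul]
  exact (hecke_mk n (HeckeRel.sv_hi k h)).trans (by simp [map_add])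

theorem phi0_rel (n : ℕ) (N : ℂ) (w' : ℕ → ℂ) (h0 : w' 0 = N) :
    ∀ ⦃x y : FreeAlgebra ℂ (AIdx n)⦄, AffRel n N x y → phi0 n w' x = phi0 n w' y := by
  intro x y hxy
  induction hxy with
  | s_sq k h => simp only [map_mul, map_one, phi0_S]; exact hS_sq n k h
  | t_sq k h => simp [map_mul, map_smul, phi0_T]
  | st k h => simp [map_mul, phi0_S, phi0_T]
  | ts k h => simp [map_mul, phi0_S, phi0_T]
  | braid k h => simp only [map_mul, phi0_S]; exact hS_braid n k h
  | ttt_lo k h => simp [map_mul, phi0_T]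
  | ttt_hi k h => simp [map_mul, phi0_T]
  | stt k h => simp [map_mul, phi0_S, phi0_T]
  | tts k h => simp [map_mul, phi0_S, phi0_T]
  | ss_comm k l h => simp only [map_mul, phi0_S]; exact hS_comm n k l h
  | ts_comm k l h => simp [map_mul, phi0_S, phi0_T]
  | tt_comm k l h => simp [map_mul, phi0_T]
  | yy_comm k l h => simp only [map_mul, phi0_Y]; exact hV_comm n k l h
  | ws_comm i k h =>
      simp only [map_mul, phi0_S, phi0_W n N w' h0]
      exact (Algebra.commutes _ _)
  | wt_comm i k h => simp [map_mul, phi0_T, phi0_W n N w' h0]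
  | wy_comm i k h =>
      simp only [map_mul, phi0_Y, phi0_W n N w' h0]
      exact (Algebra.commutes _ _)
  | ww_comm i j h =>
      simp only [map_mul, phi0_W n N w' h0]
      exact (Algebra.commutes _ _)
  | sy_comm k l h => simp only [map_mul, phi0_S, phi0_Y]; exact hSV_comm n k l h
  | ty_comm k l h => simp [map_mul, phi0_T, phi0_Y]
  | sy_lo k h =>
      simp only [map_mul, map_add, map_sub, map_one, phi0_S, phi0_Y, phi0_T]
      rw [hSV_lo n k h, add_zero]
  | sy_hi k h =>
      simp only [map_mul, map_add, map_sub, map_one, phi0_S, phi0_Y, phi0_T]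
      rw [hSV_hi n k h, sub_zero]
  | tyy k h => simp [map_mul, map_add, phi0_T, phi0_Y]
  | yyt k h => simp [map_mul, map_add, phi0_T, phi0_Y]
  | tyt i h => simp [map_mul, map_pow, phi0_T, phi0_Y, phi0_W n N w' h0]

/-- For any complex numbers `f₂, f₄, …` there is a
surjective `ℂ`-algebra homomorphism `A(n,N) → H(n)` with `s_k ↦ s_k`,
`t_k ↦ 0`, `y_k ↦ v_k`, `w_i ↦ f_i` for even `i`, the images of the odd `w_i`
being the scalars determined by the recursion
`−2 w_i = w_{i−1} + Σ_{j=1}^i (−1)^j w_{i−j} w_{j−1}` with `w₀ = N`. -/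
theorem affine_to_hecke_surjection (n : ℕ) (N : ℂ) (f : ℕ → ℂ) :
    ∃ φ : AffineBrauer n N →ₐ[ℂ] HeckeAlg n,
      Function.Surjective φ ∧
      (∀ k, 1 ≤ k → k ≤ n - 1 → φ (sA n N k) = sH n k ∧ φ (tA n N k) = 0) ∧
      (∀ k, 1 ≤ k → k ≤ n → φ (yA n N k) = vH n k) ∧
      ∃ w' : ℕ → ℂ,
        w' 0 = N ∧
        (∀ i, Even i → 1 ≤ i → w' i = f i) ∧
        (∀ i, Odd i →
          -2 * w' i = w' (i - 1)
            + ∑ j ∈ Finset.Icc 1 i, (-1 : ℂ) ^ j * (w' (i - j) * w' (j - 1))) ∧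
        (∀ i, 1 ≤ i → φ (wA n N i) = algebraMap ℂ (HeckeAlg n) (w' i)) := by
  
  classical
  set w' := wprime N f with hw'
  have h0 : w' 0 = N := wprime_zero N f
  refine ⟨RingQuot.liftAlgHom ℂ ⟨phi0 n w', phi0_rel n N w' h0⟩, ?_, ?_, ?_, w', h0, ?_, ?_, ?_⟩
  · intro z
    obtain ⟨p, rfl⟩ := RingQuot.mkAlgHom_surjective ℂ (HeckeRel n) z
    induction p using FreeAlgebra.induction with
    | grade0 r =>
        exact ⟨algebraMap ℂ _ r, by rw [AlgHom.commutes, AlgHom.commutes]⟩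
    | grade1 x =>
        match x with
        | Sum.inl k =>
            refine ⟨sA n N (k.1+1), ?_⟩
            rw [sA, RingQuot.liftAlgHom_mkAlgHom_apply, phi0_S, sH, hS,
              dif_pos (by constructor <;> omega : 1 ≤ k.1+1 ∧ k.1+1 ≤ n - 1)]
            congr 2
        | Sum.inr k =>
            refine ⟨yA n N (k.1+1), ?_⟩
            rw [yA, RingQuot.liftAlgHom_mkAlgHom_apply, phi0_Y, vH, hV,
              dif_pos (by constructor <;> omega : 1 ≤ k.1+1 ∧ k.1+1 ≤ n)]
            congr 2
    | mul a b ha hb =>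
        obtain ⟨qa, hqa⟩ := ha; obtain ⟨qb, hqb⟩ := hb
        exact ⟨qa * qb, by rw [map_mul, map_mul, hqa, hqb]⟩
    | add a b ha hb =>
        obtain ⟨qa, hqa⟩ := ha; obtain ⟨qb, hqb⟩ := hb
        exact ⟨qa + qb, by rw [map_add, map_add, hqa, hqb]⟩
  · intro k h1 h2
    constructor
    · rw [sA, RingQuot.liftAlgHom_mkAlgHom_apply, phi0_S]
    · rw [tA, RingQuot.liftAlgHom_mkAlgHom_apply, phi0_T]
  · intro k h1 h2
    rw [yA, RingQuot.liftAlgHom_mkAlgHom_apply, phi0_Y]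
  · intro i hi h1
    exact wprime_even N f i hi h1
  · intro i hi
    exact wprime_odd N f i hi
  · intro i hi
    rw [wA, RingQuot.liftAlgHom_mkAlgHom_apply, phi0_W n N w' h0]
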